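/- arXiv:2006.05071 — 2 statements merged into one kernel-verified Lean document; each statement's English description precedes it below -/
import Mathlib

section
/- Let A be a nonempty set and let f, g : A → S² be bijective functions from A onto the unit sphere in ℝ³. Then the constraint C — namely that for all x, y ∈ A and all rotation matrices R_x, R_y ∈ SO(3), R_x f(x) = R_y f(y) if and only if R_x g(x) = R_y g(y) — holds if and only if f = g or f = −g. -/
open Matrix

/-- `SO3 R` means `R` is a real 3×3 special orthogonal (rotation) matrix. -/
def SO3 (R : Matrix (Fin 3) (Fin 3) ℝ) : Prop := Rᵀ * R = 1 ∧ R.det = 1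

/-- Action of a 3×3 matrix on ℝ³ by matrix-vector multiplication. -/
noncomputable def act (R : Matrix (Fin 3) (Fin 3) ℝ) (v : EuclideanSpace ℝ (Fin 3)) :
    EuclideanSpace ℝ (Fin 3) := Matrix.toEuclideanLin R v

def rotmAux (a b c t : ℝ) : Matrix (Fin 3) (Fin 3) ℝ :=
  !![2*a*a*t - 1, 2*a*b*t, 2*a*c*t;
     2*b*a*t, 2*b*b*t - 1, 2*b*c*t;
     2*c*a*t, 2*c*b*t, 2*c*c*t - 1]

lemma rotmAux_so3 (a b c t : ℝ) (h : (a^2+b^2+c^2) * t = 1) : SO3 (rotmAux a b c t) := by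
  have hsymm : (rotmAux a b c t)ᵀ = rotmAux a b c t := by
    ext i j; fin_cases i <;> fin_cases j <;> simp [rotmAux] <;> exact Or.inl (by ring)
  constructor
  · rw [hsymm, rotmAux, Matrix.mul_fin_three, Matrix.one_fin_three]
    ext i j
    fin_cases i <;> fin_cases j <;>
      simp [Matrix.vecHead, Matrix.vecTail] <;>
      first
        | linear_combination (4*a^2*t)*h
        | linear_combination (4*a*b*t)*h
        | linear_combination (4*a*c*t)*h
        | linear_combination (4*b^2*t)*h
        | linear_combination (4*b*c*t)*h
        | linear_combination (4*c^2*t)*h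
  · rw [Matrix.det_fin_three]
    simp [rotmAux]
    linear_combination 2*h

lemma act_apply (R : Matrix (Fin 3) (Fin 3) ℝ) (v : EuclideanSpace ℝ (Fin 3)) (i : Fin 3) :
    act R v i = ∑ j, R i j * v j := by
  simp [act, Matrix.toEuclideanLin, Matrix.mulVec, dotProduct]

lemma act_one (v : EuclideanSpace ℝ (Fin 3)) : act 1 v = v := by
  ext i; rw [act_apply]; simp [Matrix.one_apply]

lemma so3_one : SO3 (1 : Matrix (Fin 3) (Fin 3) ℝ) := ⟨by simp, by simp⟩

lemma act_neg (R : Matrix (Fin 3) (Fin 3) ℝ) (v : EuclideanSpace ℝ (Fin 3)) :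
    act R (-v) = -act R v := by
  show Matrix.toEuclideanLin R (-v) = -(Matrix.toEuclideanLin R v)
  exact map_neg _ _

lemma act_rotmAux (a b c t : ℝ) (v : EuclideanSpace ℝ (Fin 3)) (i : Fin 3) :
    act (rotmAux a b c t) v i =
      2*t*(a * v 0 + b * v 1 + c * v 2) * ![a, b, c] i - v i := by
  rw [act_apply]
  fin_cases i <;> simp [rotmAux, Fin.sum_univ_three] <;> ring

lemma sphere_coords (u : EuclideanSpace ℝ (Fin 3))
    (hu : u ∈ Metric.sphere (0 : EuclideanSpace ℝ (Fin 3)) 1) :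
    (u 0)^2 + (u 1)^2 + (u 2)^2 = 1 := by
  have h : ‖u‖ = 1 := by simpa using hu
  rw [EuclideanSpace.norm_eq] at h
  have h2 : (∑ i, ‖u i‖ ^ 2) = 1 := by
    have := congrArg (· ^ 2) h
    simpa [Real.sq_sqrt (Finset.sum_nonneg fun i _ => sq_nonneg _)] using this
  simpa [Fin.sum_univ_three, sq_abs] using h2

lemma neg_self_zero (v : EuclideanSpace ℝ (Fin 3)) (h : v = -v) : v = 0 := by
  have h2 : (2:ℝ) • v = 0 := by
    rw [two_smul, ← eq_neg_iff_add_eq_zero]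
    exact h
  rcases smul_eq_zero.mp h2 with h' | h'
  · norm_num at h'
  · exact h'

theorem stmt_0 {A : Type*} [Nonempty A]
    (f g : A → EuclideanSpace ℝ (Fin 3))
    (hf_inj : Function.Injective f) (hg_inj : Function.Injective g)
    (hf_range : Set.range f = Metric.sphere (0 : EuclideanSpace ℝ (Fin 3)) 1)
    (hg_range : Set.range g = Metric.sphere (0 : EuclideanSpace ℝ (Fin 3)) 1) :
    (∀ x y : A, ∀ Rx Ry : Matrix (Fin 3) (Fin 3) ℝ, SO3 Rx → SO3 Ry →
        (act Rx (f x) = act Ry (f y) ↔ act Rx (g x) = act Ry (g y)))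
      ↔ (f = g ∨ f = fun x => -g x) := by
  constructor
  · intro hC
    have hfu : ∀ x, (f x 0)^2 + (f x 1)^2 + (f x 2)^2 = 1 := fun x =>
      sphere_coords _ (hf_range ▸ Set.mem_range_self x)
    have hgu : ∀ x, (g x 0)^2 + (g x 1)^2 + (g x 2)^2 = 1 := fun x =>
      sphere_coords _ (hg_range ▸ Set.mem_range_self x)
    have hfnz : ∀ x, f x ≠ 0 := by
      intro x h0
      have := hfu x
      rw [h0] at this
      norm_num at this
    -- Step 1: pointwise g x = ± f x
    have key : ∀ x, g x = f x ∨ g x = -(f x) := by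
      intro x
      have hq : ((f x 0)^2+(f x 1)^2+(f x 2)^2) * 1 = 1 := by
        rw [mul_one]; exact hfu x
      have hR : SO3 (rotmAux (f x 0) (f x 1) (f x 2) 1) := rotmAux_so3 _ _ _ 1 hq
      have hfix : act (rotmAux (f x 0) (f x 1) (f x 2) 1) (f x) = act 1 (f x) := by
        ext i
        rw [act_rotmAux, act_one]
        fin_cases i <;> simp <;>
          first
            | linear_combination (2 * f x 0) * hfu x
            | linear_combination (2 * f x 1) * hfu x
            | linear_combination (2 * f x 2) * hfu x
      have hg := (hC x x (rotmAux (f x 0) (f x 1) (f x 2) 1) 1 hR so3_one).mp hfix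
      rw [act_one] at hg
      have hg0 : (f x 0 * g x 0 + f x 1 * g x 1 + f x 2 * g x 2) * f x 0 = g x 0 := by
        have h0 : act (rotmAux (f x 0) (f x 1) (f x 2) 1) (g x) 0 = g x 0 := by rw [hg]
        rw [act_rotmAux] at h0
        simp at h0
        linarith
      have hg1 : (f x 0 * g x 0 + f x 1 * g x 1 + f x 2 * g x 2) * f x 1 = g x 1 := by
        have h0 : act (rotmAux (f x 0) (f x 1) (f x 2) 1) (g x) 1 = g x 1 := by rw [hg]
        rw [act_rotmAux] at h0
        simp at h0
        linarith
      have hg2 : (f x 0 * g x 0 + f x 1 * g x 1 + f x 2 * g x 2) * f x 2 = g x 2 := by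
        have h0 : act (rotmAux (f x 0) (f x 1) (f x 2) 1) (g x) 2 = g x 2 := by rw [hg]
        rw [act_rotmAux] at h0
        simp at h0
        linarith
      have hdd : (f x 0 * g x 0 + f x 1 * g x 1 + f x 2 * g x 2)^2
          * ((f x 0)^2 + (f x 1)^2 + (f x 2)^2)
          = (g x 0)^2 + (g x 1)^2 + (g x 2)^2 := by
        linear_combination
          ((f x 0 * g x 0 + f x 1 * g x 1 + f x 2 * g x 2) * f x 0 + g x 0) * hg0
          + ((f x 0 * g x 0 + f x 1 * g x 1 + f x 2 * g x 2) * f x 1 + g x 1) * hg1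
          + ((f x 0 * g x 0 + f x 1 * g x 1 + f x 2 * g x 2) * f x 2 + g x 2) * hg2
      have hd2 : (f x 0 * g x 0 + f x 1 * g x 1 + f x 2 * g x 2)^2 = 1 := by
        rw [hfu x, mul_one, hgu x] at hdd
        exact hdd
      have hfact : ((f x 0 * g x 0 + f x 1 * g x 1 + f x 2 * g x 2) - 1)
          * ((f x 0 * g x 0 + f x 1 * g x 1 + f x 2 * g x 2) + 1) = 0 := by
        linear_combination hd2
      rcases mul_eq_zero.mp hfact with h | h
      · left
        have hd1 : f x 0 * g x 0 + f x 1 * g x 1 + f x 2 * g x 2 = 1 := by linarith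
        ext i
        fin_cases i
        · show g x 0 = f x 0; rw [← hg0, hd1, one_mul]
        · show g x 1 = f x 1; rw [← hg1, hd1, one_mul]
        · show g x 2 = f x 2; rw [← hg2, hd1, one_mul]
      · right
        have hd1 : f x 0 * g x 0 + f x 1 * g x 1 + f x 2 * g x 2 = -1 := by linarith
        ext i
        fin_cases i
        · show g x 0 = -(f x 0); rw [← hg0, hd1]; ring
        · show g x 1 = -(f x 1); rw [← hg1, hd1]; ring
        · show g x 2 = -(f x 2); rw [← hg2, hd1]; ring
    -- Step 2: coherent sign
    by_cases hfg : f = g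
    · left; exact hfg
    · right
      obtain ⟨x0, hx0⟩ : ∃ x, g x = -(f x) := by
        obtain ⟨x, hx⟩ := Function.ne_iff.mp hfg
        rcases key x with h | h
        · exact absurd h.symm hx
        · exact ⟨x, h⟩
      funext y
      rcases key y with hy | hy
      · exfalso
        by_cases hcase : f y = -(f x0)
        · have hgyx0 : g y = g x0 := by rw [hy, hx0, hcase]
          have h1 : act (1 : Matrix (Fin 3) (Fin 3) ℝ) (g y) = act 1 (g x0) := by
            rw [act_one, act_one, hgyx0]
          have hf' := (hC y x0 1 1 so3_one so3_one).mpr h1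
          rw [act_one, act_one] at hf'
          rw [← hf'] at hcase
          exact hfnz y (neg_self_zero _ hcase)
        · -- generic case
          have hqne : (f y 0 + f x0 0)^2 + (f y 1 + f x0 1)^2 + (f y 2 + f x0 2)^2 ≠ 0 := by
            intro h0
            apply hcase
            have h00 : f y 0 + f x0 0 = 0 := by nlinarith [sq_nonneg (f y 0 + f x0 0), sq_nonneg (f y 1 + f x0 1), sq_nonneg (f y 2 + f x0 2)]
            have h01 : f y 1 + f x0 1 = 0 := by nlinarith [sq_nonneg (f y 0 + f x0 0), sq_nonneg (f y 1 + f x0 1), sq_nonneg (f y 2 + f x0 2)]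
            have h02 : f y 2 + f x0 2 = 0 := by nlinarith [sq_nonneg (f y 0 + f x0 0), sq_nonneg (f y 1 + f x0 1), sq_nonneg (f y 2 + f x0 2)]
            ext i
            fin_cases i
            · show f y 0 = -(f x0 0); linarith
            · show f y 1 = -(f x0 1); linarith
            · show f y 2 = -(f x0 2); linarith
          obtain ⟨t, ht⟩ : ∃ t : ℝ,
              ((f y 0 + f x0 0)^2 + (f y 1 + f x0 1)^2 + (f y 2 + f x0 2)^2) * t = 1 :=
            ⟨_, mul_inv_cancel₀ hqne⟩
          have hR : SO3 (rotmAux (f y 0 + f x0 0) (f y 1 + f x0 1) (f y 2 + f x0 2) t) :=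
            rotmAux_so3 _ _ _ _ ht
          have hclaim : act (1 : Matrix (Fin 3) (Fin 3) ℝ) (f y)
              = act (rotmAux (f y 0 + f x0 0) (f y 1 + f x0 1) (f y 2 + f x0 2) t) (f x0) := by
            ext i
            rw [act_one, act_rotmAux]
            fin_cases i <;> simp <;>
              first
                | linear_combination ((f y 0 + f x0 0)*t) * hfu y
                    - ((f y 0 + f x0 0)*t) * hfu x0 - (f y 0 + f x0 0) * ht
                | linear_combination ((f y 1 + f x0 1)*t) * hfu y
                    - ((f y 1 + f x0 1)*t) * hfu x0 - (f y 1 + f x0 1) * ht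
                | linear_combination ((f y 2 + f x0 2)*t) * hfu y
                    - ((f y 2 + f x0 2)*t) * hfu x0 - (f y 2 + f x0 2) * ht
          have hg' := (hC y x0 1 (rotmAux (f y 0 + f x0 0) (f y 1 + f x0 1) (f y 2 + f x0 2) t)
            so3_one hR).mp hclaim
          rw [act_one, hy, hx0, act_neg] at hg'
          have heq : act (rotmAux (f y 0 + f x0 0) (f y 1 + f x0 1) (f y 2 + f x0 2) t) (f x0)
              = f y := by rw [← hclaim, act_one]
          rw [heq] at hg'
          exact hfnz y (neg_self_zero _ hg')
      · rw [hy, neg_neg]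
  · rintro (h | h)
    · subst h
      intro x y Rx Ry _ _
      rfl
    · subst h
      intro x y Rx Ry _ _
      rw [act_neg, act_neg, neg_inj]
end

section
/- For all unit vectors u, v ∈ ℝ³, the inner product ⟨u, v⟩ is the greatest element of the set {(trace(R) − 1)/2 : R ∈ SO(3), Ru = v}; that is, ⟨u, v⟩ = max_{R ∈ SO(3), Ru = v} cos(θ(R)), and this maximum is attained. -/
/-!
A rotation taking `u` to `v` with `(tr R - 1)/2 = ⟨u, v⟩` is the product `H_v H_w` of the
Householder reflections in `v` and in `w = u + v` (when `v = -u`, in any nonzero `w ⊥ u`):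
`H_w` sends `u` to `-v` and `H_v` sends `-v` to `v`, and the trace of a product of two
reflections only depends on the angle between their normals.

Conversely, for `R ∈ SO(3)` with trace `t` the symmetric matrix `G = R + Rᵀ + (1 - t)·1` is
`2 (1 - cos θ) n nᵀ` for the rotation axis `n`. Without choosing an axis, Cayley–Hamilton gives
`G² = (3 - t) G`, so `G` is positive semidefinite, and `⟨u, G u⟩ ≥ 0` reads
`⟨u, R u⟩ ≥ (t - 1)/2` for a unit vector `u`.
-/

open Matrix

namespace Matrix

section Householder

variable {K n : Type*} [Field K] [Fintype n] [DecidableEq n]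

noncomputable def householder (x : n → K) : Matrix n n K :=
  1 - (2 / (x ⬝ᵥ x)) • vecMulVec x x

theorem householder_mulVec (x z : n → K) :
    householder x *ᵥ z = z - (2 * (x ⬝ᵥ z) / (x ⬝ᵥ x)) • x := by
  rw [householder, sub_mulVec, one_mulVec, smul_mulVec, vecMulVec_mulVec, op_smul_eq_smul,
    smul_smul]
  ring_nf

theorem householder_transpose (x : n → K) : (householder x)ᵀ = householder x := by
  simp [householder, transpose_sub, transpose_smul]

variable {x : n → K}

theorem householder_mul_self (hx : x ⬝ᵥ x ≠ 0) : householder x * householder x = 1 := by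
  simp only [householder, sub_mul, mul_sub, one_mul, mul_one, smul_mul_smul,
    vecMulVec_mul_vecMulVec, vecMulVec_smul, smul_smul]
  rw [show 2 / x ⬝ᵥ x * (2 / x ⬝ᵥ x) * x ⬝ᵥ x = 2 / x ⬝ᵥ x + 2 / x ⬝ᵥ x by field_simp; ring,
    add_smul]
  abel

theorem det_householder (hx : x ⬝ᵥ x ≠ 0) : (householder x).det = -1 := by
  have hrank_one :
      householder x = 1 + replicateCol Unit (-(2 / (x ⬝ᵥ x)) • x) * replicateRow Unit x := by
    rw [← vecMulVec_eq, householder, smul_vecMulVec, neg_smul, sub_eq_add_neg]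
  rw [hrank_one, det_one_add_replicateCol_mul_replicateRow, dotProduct_smul, smul_eq_mul,
    dotProduct_comm]
  field_simp
  ring

theorem trace_householder_mul_householder {y : n → K} (hx : x ⬝ᵥ x ≠ 0) (hy : y ⬝ᵥ y ≠ 0) :
    (householder x * householder y).trace
      = Fintype.card n - 4 + 4 * (x ⬝ᵥ y) ^ 2 / ((x ⬝ᵥ x) * (y ⬝ᵥ y)) := by
  simp only [householder, sub_mul, mul_sub, one_mul, mul_one, smul_mul_smul,
    vecMulVec_mul_vecMulVec, trace_sub, trace_smul, trace_one, trace_vecMulVec, smul_eq_mul,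
    dotProduct_smul]
  field_simp
  ring

omit [DecidableEq n] in
theorem exists_ne_zero_dotProduct_eq_zero (hn : 1 < Fintype.card n) (x : n → K) :
    ∃ y : n → K, y ≠ 0 ∧ y ⬝ᵥ x = 0 := by
  have hker : LinearMap.ker (dotProductBilin K K x) ≠ ⊥ :=
    LinearMap.ker_ne_bot_of_finrank_lt (by simpa using hn)
  obtain ⟨y, hy, hy0⟩ := Submodule.exists_mem_ne_zero_of_ne_bot hker
  exact ⟨y, hy0, by rw [dotProduct_comm]; simpa using hy⟩

end Householder

variable {n : Type*} [Fintype n] [DecidableEq n]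

theorem exists_householder_mulVec_eq_neg (hn : 1 < Fintype.card n) {u v : n → ℝ}
    (huv : u ⬝ᵥ u = v ⬝ᵥ v) : ∃ w : n → ℝ, w ⬝ᵥ w ≠ 0 ∧ householder w *ᵥ u = -v := by
  by_cases hsum : (u + v) ⬝ᵥ (u + v) = 0
  · obtain ⟨w, hw0, hwu⟩ := exists_ne_zero_dotProduct_eq_zero hn u
    refine ⟨w, fun h => hw0 (dotProduct_self_eq_zero.mp h), ?_⟩
    rw [householder_mulVec, hwu, eq_neg_of_add_eq_zero_right (dotProduct_self_eq_zero.mp hsum)]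
    simp
  · refine ⟨u + v, hsum, ?_⟩
    have hcoef : 2 * ((u + v) ⬝ᵥ u) / ((u + v) ⬝ᵥ (u + v)) = 1 := by
      rw [div_eq_one_iff_eq hsum]
      simp only [add_dotProduct, dotProduct_add, dotProduct_comm v u]
      linarith
    rw [householder_mulVec, hcoef, one_smul]
    abel

theorem exists_orthogonal_det_one_mulVec_eq (hn : 1 < Fintype.card n) {u v : n → ℝ}
    (hu : u ⬝ᵥ u = 1) (hv : v ⬝ᵥ v = 1) :
    ∃ R : Matrix n n ℝ, Rᵀ * R = 1 ∧ R.det = 1 ∧ R *ᵥ u = v ∧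
      R.trace = Fintype.card n - 2 + 2 * (u ⬝ᵥ v) := by
  obtain ⟨w, hw, hwu⟩ := exists_householder_mulVec_eq_neg hn (hu.trans hv.symm)
  have hv0 : v ⬝ᵥ v ≠ 0 := by rw [hv]; exact one_ne_zero
  refine ⟨householder v * householder w, ?_, ?_, ?_, ?_⟩
  · rw [transpose_mul, householder_transpose, householder_transpose, Matrix.mul_assoc,
      ← Matrix.mul_assoc (householder v), householder_mul_self hv0, Matrix.one_mul,
      householder_mul_self hw]
  · rw [det_mul, det_householder hv0, det_householder hw]
    norm_num
  · rw [← mulVec_mulVec, hwu, mulVec_neg, householder_mulVec, hv]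
    module
  · set c := 2 * (w ⬝ᵥ u) / (w ⬝ᵥ w) with hc
    have hv_eq : v = c • w - u := by
      rw [householder_mulVec] at hwu
      rw [← neg_neg v, ← hwu, neg_sub]
    have hvw : v ⬝ᵥ w = c * (w ⬝ᵥ w) - w ⬝ᵥ u := by
      rw [hv_eq, sub_dotProduct, smul_dotProduct, smul_eq_mul, dotProduct_comm u]
    have huv : u ⬝ᵥ v = c * (w ⬝ᵥ u) - 1 := by
      rw [hv_eq, dotProduct_sub, dotProduct_smul, smul_eq_mul, hu, dotProduct_comm]
    rw [trace_householder_mul_householder hv0 hw, hvw, huv, hv, hc]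
    field_simp
    ring

theorem trace_le_card_of_transpose_mul_self_eq_one {R : Matrix n n ℝ} (hR : Rᵀ * R = 1) :
    R.trace ≤ Fintype.card n := by
  have hdiag (i : n) : R i i ≤ 1 := by
    have hcol : ∑ k, R k i ^ 2 = 1 := by
      simpa [mul_apply, sq] using congrFun (congrFun hR i) i
    have hsq : R i i ^ 2 ≤ 1 :=
      hcol ▸ Finset.single_le_sum (fun k _ => sq_nonneg (R k i)) (Finset.mem_univ i)
    nlinarith
  simpa [trace] using Finset.sum_le_sum fun i (_ : i ∈ Finset.univ) => hdiag i

omit [DecidableEq n] in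
theorem dotProduct_mulVec_nonneg_of_mul_self_eq_smul {G : Matrix n n ℝ} {s : ℝ} (hG : Gᵀ = G)
    (hGG : G * G = s • G) (hs : 0 ≤ s) (x : n → ℝ) : 0 ≤ x ⬝ᵥ (G *ᵥ x) := by
  have hnorm : (G *ᵥ x) ⬝ᵥ (G *ᵥ x) = s * (x ⬝ᵥ (G *ᵥ x)) := by
    rw [← smul_eq_mul, ← dotProduct_smul, ← smul_mulVec, ← hGG, ← mulVec_mulVec,
      dotProduct_mulVec, ← mulVec_transpose, hG, dotProduct_comm]
  rcases hs.lt_or_eq with hs | rfl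
  · have hsq : 0 ≤ (G *ᵥ x) ⬝ᵥ (G *ᵥ x) := Fintype.sum_nonneg fun _ => mul_self_nonneg _
    exact nonneg_of_mul_nonneg_right (hnorm ▸ hsq) hs
  · rw [zero_mul, dotProduct_self_eq_zero] at hnorm
    rw [hnorm, dotProduct_zero]

-- Cayley–Hamilton for 3×3 matrices, solved for the adjugate.
theorem adjugate_fin_three_eq_mul_self_sub (M : Matrix (Fin 3) (Fin 3) ℝ) :
    adjugate M = M * M - M.trace • M + ((M.trace ^ 2 - (M * M).trace) / 2) • 1 := by
  ext i j
  fin_cases i <;> fin_cases j <;>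
    simp [adjugate_fin_three, mul_apply, trace_fin_three, Fin.sum_univ_three] <;> ring

end Matrix

namespace SO3

variable {R : Matrix (Fin 3) (Fin 3) ℝ}

theorem mul_self_eq (hR : SO3 R) : R * R = Rᵀ + R.trace • R - R.trace • 1 := by
  have hadj : adjugate R = Rᵀ := by
    rw [← inv_eq_left_inv hR.1, inv_def, hR.2, Ring.inverse_one, one_smul]
  have hcayley := adjugate_fin_three_eq_mul_self_sub R
  have htr : (R.trace ^ 2 - (R * R).trace) / 2 = R.trace := by
    have := congrArg trace hcayley
    simp only [hadj, trace_transpose, trace_add, trace_sub, trace_smul, trace_one, smul_eq_mul,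
      Fintype.card_fin] at this
    linear_combination -this
  rw [htr, hadj] at hcayley
  rw [hcayley]
  abel

theorem add_transpose_add_smul_one_mul_self (hR : SO3 R) :
    (R + Rᵀ + (1 - R.trace) • 1) * (R + Rᵀ + (1 - R.trace) • 1)
      = (3 - R.trace) • (R + Rᵀ + (1 - R.trace) • 1) := by
  have hRRt : R * Rᵀ = 1 := mul_eq_one_comm.mp hR.1
  have hRtRt : Rᵀ * Rᵀ = R + R.trace • Rᵀ - R.trace • 1 := by
    simpa [transpose_mul, transpose_smul] using congrArg transpose hR.mul_self_eq
  simp only [add_mul, mul_add, smul_mul_assoc, mul_smul_comm, mul_one, one_mul]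
  rw [hR.mul_self_eq, hRtRt, hR.1, hRRt]
  module

theorem trace_sub_one_div_two_mul_le (hR : SO3 R) (x : Fin 3 → ℝ) :
    (R.trace - 1) / 2 * (x ⬝ᵥ x) ≤ x ⬝ᵥ (R *ᵥ x) := by
  have htr : R.trace ≤ 3 := by simpa using trace_le_card_of_transpose_mul_self_eq_one hR.1
  have hG := dotProduct_mulVec_nonneg_of_mul_self_eq_smul
    (by simp [transpose_add, transpose_smul, add_comm R]) hR.add_transpose_add_smul_one_mul_self
    (sub_nonneg.mpr htr) x
  have hRt : x ⬝ᵥ (Rᵀ *ᵥ x) = x ⬝ᵥ (R *ᵥ x) := by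
    rw [mulVec_transpose, dotProduct_comm, dotProduct_mulVec]
  simp only [add_mulVec, smul_mulVec, one_mulVec, dotProduct_add, dotProduct_smul, smul_eq_mul,
    hRt] at hG
  linarith

end SO3

theorem stmt_3 (u v : EuclideanSpace ℝ (Fin 3)) (hu : ‖u‖ = 1) (hv : ‖v‖ = 1) :
    IsGreatest {c : ℝ | ∃ R : Matrix (Fin 3) (Fin 3) ℝ,
        SO3 R ∧ act R u = v ∧ c = (R.trace - 1) / 2}
      (inner ℝ u v : ℝ) := by
  have hinner : inner ℝ u v = u.ofLp ⬝ᵥ v.ofLp := dotProduct_comm _ _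
  have hunit {w : EuclideanSpace ℝ (Fin 3)} (hw : ‖w‖ = 1) : w.ofLp ⬝ᵥ w.ofLp = 1 := by
    calc w.ofLp ⬝ᵥ w.ofLp = inner ℝ w w := rfl
      _ = 1 := by rw [real_inner_self_eq_norm_sq, hw, one_pow]
  refine ⟨?_, ?_⟩
  · obtain ⟨R, hRt, hdet, hRu, htr⟩ :=
      exists_orthogonal_det_one_mulVec_eq (by simp) (hunit hu) (hunit hv)
    refine ⟨R, ⟨hRt, hdet⟩, congrArg (WithLp.toLp 2) hRu, ?_⟩
    rw [hinner, htr]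
    norm_num
  · rintro _ ⟨R, hR, hRu, rfl⟩
    have hRv : R *ᵥ u.ofLp = v.ofLp := congrArg WithLp.ofLp hRu
    simpa [hinner, hunit hu, ← hRv] using hR.trace_sub_one_div_two_mul_le u.ofLp
end
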